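/- arXiv:1504.02671 — 11 statements merged into one kernel-verified Lean document; each statement's English description precedes it below -/
import Mathlib

section
/- Let T be a string and let i, j, j' be positions in T. If LCE(j', j) ≥ LCE(i, j), then LCE(i, j) = min(LCE(i, j'), LCE(j', j)). -/
/-- The longest common extension of suffixes `i` and `j` of `T`: the largest `ℓ`
with `ℓ ≤ |T| - i`, `ℓ ≤ |T| - j` and `(T.drop i).take ℓ = (T.drop j).take ℓ`. -/
def lce {α : Type*} [DecidableEq α] (T : List α) (i j : ℕ) : ℕ :=
  Nat.findGreatest
    (fun ℓ => ℓ ≤ T.length - i ∧ ℓ ≤ T.length - j ∧ (T.drop i).take ℓ = (T.drop j).take ℓ)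
    T.length

private lemma take_eq_of_le {α : Type*} {X Y : List α} {m k : ℕ} (hk : k ≤ m)
    (h : X.take m = Y.take m) : X.take k = Y.take k := by
  have : (X.take m).take k = (Y.take m).take k := by rw [h]
  simpa [List.take_take, Nat.min_eq_left hk] using this

private lemma lce_spec {α : Type*} [DecidableEq α] (T : List α) (i j : ℕ) :
    lce T i j ≤ T.length - i ∧ lce T i j ≤ T.length - j ∧
      (T.drop i).take (lce T i j) = (T.drop j).take (lce T i j) := by
  unfold lce
  exact Nat.findGreatest_spec
    (P := fun ℓ => ℓ ≤ T.length - i ∧ ℓ ≤ T.length - j ∧ (T.drop i).take ℓ = (T.drop j).take ℓ)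
    (m := 0) (Nat.zero_le _) ⟨Nat.zero_le _, Nat.zero_le _, rfl⟩

private lemma le_lce {α : Type*} [DecidableEq α] {T : List α} {i j ℓ : ℕ}
    (h1 : ℓ ≤ T.length - i) (h2 : ℓ ≤ T.length - j)
    (h3 : (T.drop i).take ℓ = (T.drop j).take ℓ) : ℓ ≤ lce T i j :=
  Nat.le_findGreatest (le_trans h1 (Nat.sub_le _ _)) ⟨h1, h2, h3⟩

theorem stmt_0 {α : Type*} [DecidableEq α] (T : List α) (i j j' : ℕ)
    (hi : i ≤ T.length) (hj : j ≤ T.length) (hj' : j' ≤ T.length)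
    (h : lce T j' j ≥ lce T i j) :
    lce T i j = min (lce T i j') (lce T j' j) := by
  obtain ⟨ha1, ha2, ha3⟩ := lce_spec T i j
  obtain ⟨hb1, hb2, hb3⟩ := lce_spec T i j'
  obtain ⟨hc1, hc2, hc3⟩ := lce_spec T j' j
  set a := lce T i j
  set b := lce T i j'
  set c := lce T j' j
  apply le_antisymm
  · refine le_min ?_ h
    -- a ≤ b
    exact le_lce ha1 (le_trans h hc1)
      ((ha3.trans (take_eq_of_le h hc3).symm))
  · -- min b c ≤ a
    apply le_lce (le_trans (min_le_left _ _) hb1) (le_trans (min_le_right _ _) hc2)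
    calc (T.drop i).take (min b c) = (T.drop j').take (min b c) :=
          take_eq_of_le (min_le_left _ _) hb3
      _ = (T.drop j).take (min b c) := take_eq_of_le (min_le_right _ _) hc3
end

section
/- (Fine and Wilf) If a string S has periods a and b and |S| ≥ a + b − gcd(a, b), then gcd(a, b) is also a period of S. -/
/-- `p` is a period of the string `S`: `0 < p ≤ |S|` and characters `p` apart agree. -/
def IsPeriod {α : Type*} (S : List α) (p : ℕ) : Prop :=
  0 < p ∧ p ≤ S.length ∧ ∀ k < S.length - p, S[k]? = S[k + p]?

private lemma fw_mul_per {α : Type*} (S : List α) (p L : ℕ)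
    (H : ∀ k, k + p < L → S[k]? = S[k + p]?) :
    ∀ m k, k + m * p < L → S[k]? = S[k + m * p]? := by
  intro m
  induction m with
  | zero => simp
  | succ m ih =>
    intro k hk
    rw [Nat.succ_mul] at hk
    have h1 : k + p < L := by omega
    have h2 : (k + p) + m * p < L := by omega
    calc S[k]? = S[k + p]? := H k h1
      _ = S[(k + p) + m * p]? := ih (k + p) h2
      _ = S[k + (m + 1) * p]? := by rw [show k + (m+1)*p = (k+p) + m*p by ring]

private lemma fw_aux {α : Type*} : ∀ n a b : ℕ, a ≤ b → a + b ≤ n → ∀ (S : List α),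
    IsPeriod S a → IsPeriod S b → a + b - Nat.gcd a b ≤ S.length →
    IsPeriod S (Nat.gcd a b) := by
  intro n
  induction n with
  | zero => intro a b _ hn S ha _ _; exact absurd ha.1 (by omega)
  | succ n ih =>
    intro a b hle hn S ha hb h
    rcases lt_or_eq_of_le hle with hab | hab
    · -- main case a < b
      obtain ⟨ha0, haL, hA⟩ := ha
      obtain ⟨hb0, hbL, hB⟩ := hb
      set g := Nat.gcd a b with hg
      have hga : g ∣ a := Nat.gcd_dvd_left a b
      have hgb : g ∣ b := Nat.gcd_dvd_right a b
      have hg0 : 0 < g := Nat.gcd_pos_of_pos_left b ha0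
      have hgle : g ≤ a := Nat.le_of_dvd ha0 hga
      have hgba : g ∣ (b - a) := Nat.dvd_sub hgb hga
      have hgba' : g ≤ b - a := Nat.le_of_dvd (by omega) hgba
      set L := S.length - a with hL
      set T := S.take L with hT
      have hTlen : T.length = L := by
        simp [hT, hL]
      have hTget : ∀ k, k < L → T[k]? = S[k]? := by
        intro k hk
        rw [hT, List.getElem?_take]
        simp [hk]
      have hLb : b - g ≤ L := by omega
      have haL' : a ≤ L := by omega
      -- a is a period of T
      have hTa : IsPeriod T a := by
        refine ⟨ha0, by omega, ?_⟩
        intro k hk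
        rw [hTlen] at hk
        have h1 : k + a < L := by omega
        rw [hTget k (by omega), hTget (k + a) h1]
        exact hA k (by omega)
      -- b - a is a period of T
      have hTba : IsPeriod T (b - a) := by
        refine ⟨by omega, by omega, ?_⟩
        intro k hk
        rw [hTlen] at hk
        have hkb : k + b < S.length := by omega
        have e1 : S[k]? = S[k + b]? := hB k (by omega)
        have e2 : S[k + b - a]? = S[k + b - a + a]? := hA (k + b - a) (by omega)
        rw [hTget k (by omega), hTget (k + (b - a)) (by omega)]
        rw [show k + (b - a) = k + b - a by omega]
        rw [e2, show k + b - a + a = k + b by omega, e1]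
      have hgcd : Nat.gcd a (b - a) = g := by
        rw [hg, Nat.gcd_comm a b, Nat.gcd_comm a (b - a), Nat.gcd_sub_self_left (le_of_lt hab)]
      have hrec : IsPeriod T g := by
        rcases le_total a (b - a) with hc | hc
        · have := ih a (b - a) hc (by omega) T hTa hTba
            (by rw [hgcd, hTlen]; omega)
          rwa [hgcd] at this
        · have := ih (b - a) a hc (by omega) T hTba hTa
            (by rw [Nat.gcd_comm, hgcd, hTlen]; omega)
          rwa [Nat.gcd_comm, hgcd] at this
      obtain ⟨_, hgL, hG⟩ := hrec
      rw [hTlen] at hgL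
      -- transfer T-period to a statement about S
      have HT : ∀ k, k + g < L → S[k]? = S[k + g]? := by
        intro k hk
        have := hG k (by rw [hTlen]; omega)
        rwa [hTget k (by omega), hTget (k + g) hk] at this
      have HTm := fw_mul_per S g L HT
      refine ⟨hg0, by omega, ?_⟩
      intro k hk
      have hkg : k + g < S.length := by omega
      by_cases h1 : k + g < L
      · exact HT k h1
      · by_cases h2 : k < L
        · -- k < L ≤ k + g
          have hka : a ≤ k + g := by omega
          have e1 : S[k + g - a]? = S[k + g]? := by
            have := hA (k + g - a) (by omega)
            rwa [show k + g - a + a = k + g by omega] at this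
          obtain ⟨m, hm⟩ : g ∣ (a - g) := Nat.dvd_sub hga dvd_rfl
          have hm' : a - g = m * g := by rw [hm, mul_comm]
          have e2 : S[k + g - a]? = S[(k + g - a) + m * g]? :=
            HTm m (k + g - a) (by omega)
          rw [show (k + g - a) + m * g = k by omega] at e2
          rw [← e2, e1]
        · -- L ≤ k
          have e1 : S[k - a]? = S[k]? := by
            have := hA (k - a) (by omega)
            rwa [show k - a + a = k by omega] at this
          have e2 : S[k + g - a]? = S[k + g]? := by
            have := hA (k + g - a) (by omega)
            rwa [show k + g - a + a = k + g by omega] at this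
          have e3 : S[k - a]? = S[(k - a) + g]? := HT (k - a) (by omega)
          rw [show (k - a) + g = k + g - a by omega] at e3
          rw [← e1, e3, e2]
    · -- a = b
      subst hab
      rw [Nat.gcd_self]
      exact ha

/-- Fine and Wilf's periodicity lemma. -/
theorem stmt_3 {α : Type*} [DecidableEq α] (S : List α) (a b : ℕ)
    (ha : IsPeriod S a) (hb : IsPeriod S b)
    (h : a + b - Nat.gcd a b ≤ S.length) :
    IsPeriod S (Nat.gcd a b) := by
  rcases le_total a b with hle | hle
  · exact fw_aux (a + b) a b hle le_rfl S ha hb h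
  · rw [Nat.gcd_comm]
    refine fw_aux (a + b) b a hle (by omega) S hb ha ?_
    rw [Nat.gcd_comm]
    omega
end

section
/- Let S be a string and let q be a period of S with 2q ≤ |S|. Then q is a multiple of per(S), the smallest period of S; that is, per(S) divides q. -/
/-- `per S` is the smallest period of `S`. -/
noncomputable def per {α : Type*} (S : List α) : ℕ := sInf {p | IsPeriod S p}

lemma isPeriod_sub {α : Type*} {S : List α} {p q : ℕ}
    (hp : IsPeriod S p) (hq : IsPeriod S q) (hpq : p < q) (hsum : p + q ≤ S.length) :
    IsPeriod S (q - p) := by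
  obtain ⟨hp0, hpn, hpk⟩ := hp
  obtain ⟨hq0, hqn, hqk⟩ := hq
  refine ⟨by omega, by omega, fun k hk => ?_⟩
  by_cases hcase : k + q < S.length
  · have h1 := hqk k (by omega)
    have h2 := hpk (k + (q - p)) (by omega)
    rw [h1, h2]
    congr 1
    omega
  · have h1 := hpk (k - p) (by omega)
    have h2 := hqk (k - p) (by omega)
    have e1 : k - p + p = k := by omega
    have e2 : k - p + q = k + (q - p) := by omega
    rw [e1] at h1
    rw [e2] at h2
    rw [← h1, h2]

lemma isPeriod_gcd {α : Type*} {S : List α} (m : ℕ) : ∀ p q : ℕ, p + q ≤ m →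
    IsPeriod S p → IsPeriod S q → p + q ≤ S.length → IsPeriod S (Nat.gcd p q) := by
  induction m with
  | zero => intro p q hm hp _ _; exact absurd hp.1 (by omega)
  | succ n ih =>
    intro p q hm hp hq hsum
    rcases lt_trichotomy p q with hlt | heq | hgt
    · have hp1 := hp.1
      have hs := isPeriod_sub hp hq hlt hsum
      have := ih p (q - p) (by omega) hp hs (by omega)
      have e : Nat.gcd p (q - p) = Nat.gcd p q := by
        rw [Nat.gcd_comm p (q - p), Nat.gcd_sub_self_left (le_of_lt hlt), Nat.gcd_comm]
      rwa [e] at this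
    · subst heq; rwa [Nat.gcd_self]
    · have hq1 := hq.1
      have hs := isPeriod_sub hq hp hgt (by omega)
      have := ih (p - q) q (by omega) hs hq (by omega)
      have e : Nat.gcd (p - q) q = Nat.gcd p q := Nat.gcd_sub_self_left (le_of_lt hgt)
      rwa [e] at this

/-- Every period of length at most `|S|/2` is a multiple of the smallest period. -/
theorem stmt_4 {α : Type*} [DecidableEq α] (S : List α) (q : ℕ)
    (hq : IsPeriod S q) (h : 2 * q ≤ S.length) :
    per S ∣ q := by
  have hne : {p | IsPeriod S p}.Nonempty := ⟨q, hq⟩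
  have hper : IsPeriod S (per S) := Nat.sInf_mem hne
  have hle : per S ≤ q := Nat.sInf_le hq
  have hg : IsPeriod S (Nat.gcd (per S) q) :=
    isPeriod_gcd (per S + q) (per S) q le_rfl hper hq (by omega)
  have h1 : per S ≤ Nat.gcd (per S) q := Nat.sInf_le hg
  have h2 : Nat.gcd (per S) q ≤ per S := Nat.gcd_le_left q hper.1
  have : Nat.gcd (per S) q = per S := le_antisymm h2 h1
  rw [← this]
  exact Nat.gcd_dvd_right _ _
end

section
/- Let τ ≥ 1 and let u and v be strings, each of length 2τ, that are both periodic (i.e., per(u) ≤ τ and per(v) ≤ τ). If the concatenation u ++ v has some period of length at most τ, then per(u ++ v) = per(u), per(v) = per(u), and the prefix of v of length per(v) is a cyclic rotation of the prefix of u of length per(u) (i.e., there exists r such that v.take (per(v)) = (u.take (per(u))).rotate r). -/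
/-- characters are determined by index mod p -/
lemma period_mod {α : Type*} {S : List α} {p : ℕ} (hp : IsPeriod S p) :
    ∀ i, i < S.length → S[i]? = S[i % p]? := by
  obtain ⟨hp0, hpl, hper⟩ := hp
  intro i
  induction i using Nat.strong_induction_on with
  | _ i ih =>
    intro hi
    by_cases hip : i < p
    · rw [Nat.mod_eq_of_lt hip]
    · push_neg at hip
      have h1 : i - p + p = i := by omega
      have h2 := hper (i - p) (by omega)
      rw [h1] at h2
      have h3 : (i - p) % p = i % p := by
        conv_rhs => rw [← h1]
        rw [Nat.add_mod_right]
      rw [← h2, ih (i - p) (by omega) (by omega), h3]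

lemma period_congr {α : Type*} {S : List α} {p : ℕ} (hp : IsPeriod S p)
    {a b : ℕ} (ha : a < S.length) (hb : b < S.length) (hab : a % p = b % p) :
    S[a]? = S[b]? := by
  rw [period_mod hp a ha, period_mod hp b hb, hab]

lemma period_left {α : Type*} {u v : List α} {p : ℕ} (hp : IsPeriod (u ++ v) p)
    (hpu : p ≤ u.length) : IsPeriod u p := by
  obtain ⟨hp0, hpl, hper⟩ := hp
  refine ⟨hp0, hpu, fun k hk => ?_⟩
  have hlen : (u ++ v).length = u.length + v.length := by simp
  have h := hper k (by omega)
  rwa [List.getElem?_append_left (by omega), List.getElem?_append_left (by omega)] at h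

lemma period_right {α : Type*} {u v : List α} {p : ℕ} (hp : IsPeriod (u ++ v) p)
    (hpv : p ≤ v.length) : IsPeriod v p := by
  obtain ⟨hp0, hpl, hper⟩ := hp
  refine ⟨hp0, hpv, fun k hk => ?_⟩
  have hlen : (u ++ v).length = u.length + v.length := by simp
  have h := hper (u.length + k) (by omega)
  rwa [List.getElem?_append_right (by omega), List.getElem?_append_right (by omega),
    Nat.add_sub_cancel_left, Nat.add_assoc, Nat.add_sub_cancel_left] at h

lemma fine_wilf {α : Type*} {S : List α} (p q : ℕ) (hp : IsPeriod S p) (hq : IsPeriod S q)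
    (hpq : p + q ≤ S.length) : IsPeriod S (Nat.gcd p q) := by
  suffices H : ∀ n p q, IsPeriod S p → IsPeriod S q → p + q ≤ S.length → p + q = n →
      IsPeriod S (Nat.gcd p q) from H (p + q) p q hp hq hpq rfl
  clear hp hq hpq p q
  intro n
  induction n using Nat.strong_induction_on with
  | _ n ih =>
  intro p q hp hq hpq hn
  subst hn
  rcases lt_trichotomy p q with h | h | h
  · have hq' : IsPeriod S (q - p) := by
      obtain ⟨hp0, hpl, hperp⟩ := hp
      obtain ⟨hq0, hql, hperq⟩ := hq
      refine ⟨by omega, by omega, fun k hk => ?_⟩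
      by_cases hc : k + q < S.length
      · have h1 := hperq k (by omega)
        have h2 := hperp (k + (q - p)) (by omega)
        rw [show k + (q - p) + p = k + q by omega] at h2
        rw [h1, h2]
      · have h1 := hperp (k - p) (by omega)
        have h2 := hperq (k - p) (by omega)
        rw [show k - p + p = k by omega] at h1
        rw [show k - p + q = k + (q - p) by omega] at h2
        rw [← h1, h2]
    have := ih (p + (q - p)) (by have := hp.1; omega) p (q - p) hp hq' (by omega) rfl
    rwa [Nat.gcd_sub_self_right (le_of_lt h)] at this
  · rw [h, Nat.gcd_self]; exact hq
  · have hp' : IsPeriod S (p - q) := by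
      obtain ⟨hp0, hpl, hperp⟩ := hp
      obtain ⟨hq0, hql, hperq⟩ := hq
      refine ⟨by omega, by omega, fun k hk => ?_⟩
      by_cases hc : k + p < S.length
      · have h1 := hperp k (by omega)
        have h2 := hperq (k + (p - q)) (by omega)
        rw [show k + (p - q) + q = k + p by omega] at h2
        rw [h1, h2]
      · have h1 := hperq (k - q) (by omega)
        have h2 := hperp (k - q) (by omega)
        rw [show k - q + q = k by omega] at h1
        rw [show k - q + p = k + (p - q) by omega] at h2
        rw [← h1, h2]
    have := ih ((p - q) + q) (by have := hq.1; omega) (p - q) q hp' hq (by omega) rfl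
    rwa [Nat.gcd_sub_self_left (le_of_lt h)] at this

/-- lift a period `e` dividing `q` to the whole string, given agreement on the base segment -/
lemma period_lift {α : Type*} {S : List α} {q e : ℕ} (hq : IsPeriod S q) (he0 : 0 < e)
    (hdvd : e ∣ q)
    (hbase : ∀ i j, i < q → j < q → i % e = j % e → S[i]? = S[j]?) : IsPeriod S e := by
  have heq : e ≤ q := Nat.le_of_dvd hq.1 hdvd
  refine ⟨he0, le_trans heq hq.2.1, fun k hk => ?_⟩
  have h1 : S[k]? = S[k % q]? := period_mod hq k (by omega)
  have h2 : S[k + e]? = S[(k + e) % q]? := period_mod hq (k + e) (by omega)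
  rw [h1, h2]
  apply hbase _ _ (Nat.mod_lt _ hq.1) (Nat.mod_lt _ hq.1)
  rw [Nat.mod_mod_of_dvd _ hdvd, Nat.mod_mod_of_dvd _ hdvd, Nat.add_mod_right]

/-- If `u` and `v` are periodic strings of length `2τ` and `u ++ v` has a period of
length at most `τ`, then `per (u ++ v) = per u`, `per v = per u`, and the period of `v`
is a cyclic rotation of the period of `u`. -/
theorem stmt_5 {α : Type*} [DecidableEq α] (τ : ℕ) (hτ : 1 ≤ τ) (u v : List α)
    (hu : u.length = 2 * τ) (hv : v.length = 2 * τ)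
    (hpu : per u ≤ τ) (hpv : per v ≤ τ)
    (h : ∃ p ≤ τ, IsPeriod (u ++ v) p) :
    per (u ++ v) = per u ∧ per v = per u ∧
      ∃ r, v.take (per v) = (u.take (per u)).rotate r := by
  obtain ⟨p, hpτ, hP⟩ := h
  set S := u ++ v with hSdef
  have hlenS : S.length = 4 * τ := by simp [hSdef, hu, hv]; omega
  have hmem : ∀ (L : List α) (r : ℕ), IsPeriod L r → r ∈ {x | IsPeriod L x} := fun _ _ h => h
  have hq : IsPeriod S (per S) := Nat.sInf_mem ⟨p, hmem S p hP⟩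
  set q := per S with hqdef
  have hqp : q ≤ p := Nat.sInf_le hP
  have hqτ : q ≤ τ := le_trans hqp hpτ
  have hq0 : 0 < q := hq.1
  have hqu : IsPeriod u q := period_left hq (by omega)
  have hqv : IsPeriod v q := period_right hq (by omega)
  have hd : IsPeriod u (per u) := Nat.sInf_mem ⟨q, hmem u q hqu⟩
  set d := per u with hddef
  have hdq : d ≤ q := Nat.sInf_le hqu
  have hd0 : 0 < d := hd.1
  have hddvd : d ∣ q := by
    have hg := fine_wilf d q hd hqu (by omega)
    have h1 : d ≤ Nat.gcd d q := Nat.sInf_le hg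
    have h3 : Nat.gcd d q ∣ d := Nat.gcd_dvd_left _ _
    have heq : Nat.gcd d q = d := le_antisymm (Nat.le_of_dvd hd0 h3) h1
    rw [← heq]; exact Nat.gcd_dvd_right _ _
  have he : IsPeriod v (per v) := Nat.sInf_mem ⟨q, hmem v q hqv⟩
  set e := per v with hedef
  have heq' : e ≤ q := Nat.sInf_le hqv
  have he0 : 0 < e := he.1
  have hedvd : e ∣ q := by
    have hg := fine_wilf e q he hqv (by omega)
    have h1 : e ≤ Nat.gcd e q := Nat.sInf_le hg
    have h3 : Nat.gcd e q ∣ e := Nat.gcd_dvd_left _ _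
    have heq : Nat.gcd e q = e := le_antisymm (Nat.le_of_dvd he0 h3) h1
    rw [← heq]; exact Nat.gcd_dvd_right _ _
  have hSu : ∀ i, i < 2 * τ → S[i]? = u[i]? := fun i hi =>
    List.getElem?_append_left (by omega)
  have hSv : ∀ j, j < 2 * τ → S[2 * τ + j]? = v[j]? := by
    intro j hj
    rw [hSdef, List.getElem?_append_right (by omega)]
    congr 1
    omega
  -- d is a period of S
  have hSd : IsPeriod S d := by
    apply period_lift hq hd0 hddvd
    intro i j hi hj hij
    rw [hSu i (by omega), hSu j (by omega), period_mod hd i (by omega),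
      period_mod hd j (by omega), hij]
  have hqd : q = d := le_antisymm (Nat.sInf_le hSd) hdq
  -- e is a period of S
  have hC : 2 * τ ≤ 2 * τ * q := Nat.le_mul_of_pos_right _ hq0
  have hSe : IsPeriod S e := by
    apply period_lift hq he0 hedvd
    intro i j hi hj hij
    have key : ∀ i, i < q → S[i]? = v[(i + (2 * τ * q - 2 * τ)) % q]? := by
      intro i hi
      have hmlt : (i + (2 * τ * q - 2 * τ)) % q < q := Nat.mod_lt _ hq0
      have h1 : S[i]? = S[2 * τ + (i + (2 * τ * q - 2 * τ)) % q]? := by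
        apply period_congr hq (by omega) (by omega)
        conv_rhs => rw [Nat.add_mod, Nat.mod_mod_of_dvd _ dvd_rfl, ← Nat.add_mod]
        rw [show 2 * τ + (i + (2 * τ * q - 2 * τ)) = i + 2 * τ * q by omega,
          Nat.add_mul_mod_self_right, Nat.mod_eq_of_lt hi]
      rw [h1, hSv _ (by omega)]
    rw [key i hi, key j hj,
      period_mod he ((i + (2 * τ * q - 2 * τ)) % q)
        (by have := Nat.mod_lt (i + (2 * τ * q - 2 * τ)) hq0; omega),
      period_mod he ((j + (2 * τ * q - 2 * τ)) % q)
        (by have := Nat.mod_lt (j + (2 * τ * q - 2 * τ)) hq0; omega)]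
    congr 1
    rw [Nat.mod_mod_of_dvd _ hedvd, Nat.mod_mod_of_dvd _ hedvd,
      Nat.add_mod i, Nat.add_mod j, hij]
  have hed : e = d := le_antisymm (hqd ▸ heq') (hqd ▸ Nat.sInf_le hSe)
  refine ⟨hqd, hed, ⟨2 * τ % d, ?_⟩⟩
  rw [hed]
  apply List.ext_getElem
  · simp [hu, hv]
  · intro j h1 h2
    have hjd : j < d := by simp only [List.length_take, hv] at h1; omega
    have hjd2 : (j + 2 * τ % d) % d < d := Nat.mod_lt _ hd0
    have hmod : (2 * τ + j) % d = (j + 2 * τ % d) % d := by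
      rw [Nat.add_mod, Nat.mod_eq_of_lt hjd, Nat.add_comm]
    have step : v[j]? = u[(j + 2 * τ % d) % d]? := by
      rw [← hSv j (by omega), period_mod hSd (2 * τ + j) (by omega), hmod,
        hSu _ (by omega)]
    rw [List.getElem?_eq_getElem (by omega), List.getElem?_eq_getElem (by omega)] at step
    have hval := Option.some.inj step
    simp only [List.getElem_rotate, List.getElem_take, List.length_take, hu,
      show min d (2 * τ) = d by omega]
    exact hval
end

section
/- Let τ ≥ 1 and let u₀, u₁, …, u_M (M ≥ 1) be strings, each of length 2τ, such that for every i < M the concatenation uᵢ ++ u_{i+1} has some period of length at most τ. Then per(u₀) (the smallest period of u₀) is a period of the full concatenation u₀ ++ u₁ ++ ⋯ ++ u_M. -/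
/-!
If `A ++ B` has a period `p` with `2p ≤ |A|`, then reducing positions modulo `p` moves every
comparison `S[k] = S[k + per A]` into `A`, so `per A` is a period of `A ++ B`; conversely every
period of `A ++ B` that is at most `p` is one of `A`. Hence `per (A ++ B) = per A`, and by reversal
also `= per B`. Along the chain, every `uᵢ` therefore has the same smallest period `q = per u₀`,
every `uᵢ ++ uᵢ₊₁` has period `q`, and overlapping blocks of period `q` glue together.
-/

namespace IsPeriod

variable {α : Type*} {S A B : List α} {p q : ℕ}

theorem iff_forall_add_lt :
    IsPeriod S p ↔
      0 < p ∧ p ≤ S.length ∧ ∀ k, k + p < S.length → S[k]? = S[k + p]? := by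
  refine and_congr_right fun _ => and_congr_right fun _ => forall_congr' fun k => ?_
  exact imp_congr_left (by omega)

theorem getElem?_add (h : IsPeriod S p) {k : ℕ} (hk : k + p < S.length) :
    S[k]? = S[k + p]? :=
  (iff_forall_add_lt.mp h).2.2 k hk

theorem getElem?_add_mul (h : IsPeriod S p) (t : ℕ) {k : ℕ} (hk : k + p * t < S.length) :
    S[k]? = S[k + p * t]? := by
  induction t generalizing k with
  | zero => simp
  | succ t ih =>
    rw [Nat.mul_succ] at hk
    rw [h.getElem?_add (by omega), ih (by omega)]
    congr 1
    ring

theorem of_length_pos (hS : 0 < S.length) : IsPeriod S S.length :=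
  ⟨hS, le_rfl, fun k hk => by omega⟩

theorem left_of_append (h : IsPeriod (A ++ B) p) (hp : p ≤ A.length) : IsPeriod A p := by
  refine iff_forall_add_lt.mpr ⟨h.1, hp, fun k hk => ?_⟩
  have := h.getElem?_add (k := k) (by simp only [List.length_append]; omega)
  rwa [List.getElem?_append_left (by omega), List.getElem?_append_left hk] at this

theorem reverse (h : IsPeriod S p) : IsPeriod S.reverse p := by
  refine iff_forall_add_lt.mpr ⟨h.1, by simpa using h.2.1, fun k hk => ?_⟩
  rw [List.length_reverse] at hk
  rw [List.getElem?_reverse (by omega), List.getElem?_reverse (by omega)]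
  have := h.getElem?_add (k := S.length - 1 - (k + p)) (by omega)
  rwa [show S.length - 1 - (k + p) + p = S.length - 1 - k by omega, eq_comm] at this

theorem of_append_of_left (h : IsPeriod (A ++ B) p) (hq : IsPeriod A q)
    (hpq : p + q ≤ A.length) : IsPeriod (A ++ B) q := by
  have hAB : (A ++ B).length = A.length + B.length := List.length_append
  refine iff_forall_add_lt.mpr ⟨hq.1, by omega, fun k hk => ?_⟩
  have hmod : k % p < p := Nat.mod_lt k h.1
  have hdiv : k % p + p * (k / p) = k := Nat.mod_add_div k p
  have hleft : (A ++ B)[k % p]? = (A ++ B)[k % p + q]? := by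
    rw [List.getElem?_append_left (by omega), List.getElem?_append_left (by omega)]
    exact hq.getElem?_add (by omega)
  have hk : (A ++ B)[k % p]? = (A ++ B)[k]? := by
    simpa only [hdiv] using h.getElem?_add_mul (k := k % p) (k / p) (by omega)
  have hkq : (A ++ B)[k % p + q]? = (A ++ B)[k + q]? := by
    rw [h.getElem?_add_mul (k := k % p + q) (k / p) (by omega)]
    congr 1
    omega
  rw [← hk, ← hkq, hleft]

theorem append_of_overlap {X Y Z : List α} (hXY : IsPeriod (X ++ Y) q)
    (hYZ : IsPeriod (Y ++ Z) q) (hq : q ≤ Y.length) : IsPeriod (X ++ Y ++ Z) q := by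
  have hXY_len : (X ++ Y).length = X.length + Y.length := List.length_append
  have hXYZ_len : (X ++ Y ++ Z).length = X.length + Y.length + Z.length := by
    simp only [List.length_append]
  have hYZ_len : (Y ++ Z).length = Y.length + Z.length := List.length_append
  refine iff_forall_add_lt.mpr ⟨hXY.1, by omega, fun k hk => ?_⟩
  by_cases hk' : k + q < X.length + Y.length
  · rw [List.getElem?_append_left (l₁ := X ++ Y) (by omega),
      List.getElem?_append_left (l₁ := X ++ Y) (by omega)]
    exact hXY.getElem?_add (by omega)
  · rw [List.append_assoc, List.getElem?_append_right (l₁ := X) (by omega),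
      List.getElem?_append_right (l₁ := X) (by omega),
      show k + q - X.length = k - X.length + q by omega]
    exact hYZ.getElem?_add (by omega)

end IsPeriod

section per

variable {α : Type*} {S A B : List α} {p : ℕ}

theorem isPeriod_reverse_iff : IsPeriod S.reverse p ↔ IsPeriod S p :=
  ⟨fun h => by simpa using h.reverse, IsPeriod.reverse⟩

theorem IsPeriod.per_le (h : IsPeriod S p) : per S ≤ p :=
  Nat.sInf_le h

theorem IsPeriod.isPeriod_per (h : IsPeriod S p) : IsPeriod S (per S) :=
  Nat.sInf_mem (s := {p | IsPeriod S p}) ⟨p, h⟩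

theorem per_reverse (S : List α) : per S.reverse = per S := by
  simp only [per, isPeriod_reverse_iff]

theorem per_le_length (hS : 0 < S.length) : per S ≤ S.length :=
  (IsPeriod.of_length_pos hS).per_le

theorem per_append_eq_left (h : IsPeriod (A ++ B) p) (hp : 2 * p ≤ A.length) :
    per (A ++ B) = per A := by
  have hA : IsPeriod A p := h.left_of_append (by omega)
  have hperA : IsPeriod (A ++ B) (per A) :=
    h.of_append_of_left hA.isPeriod_per (by have := hA.per_le; omega)
  have hle : per (A ++ B) ≤ p := h.per_le
  exact le_antisymm hperA.per_le (h.isPeriod_per.left_of_append (by omega)).per_le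

theorem per_append_eq_right (h : IsPeriod (A ++ B) p) (hp : 2 * p ≤ B.length) :
    per (A ++ B) = per B := by
  have h' : IsPeriod (B.reverse ++ A.reverse) p := by
    rw [← List.reverse_append]; exact h.reverse
  rw [← per_reverse, List.reverse_append, per_append_eq_left h' (by simpa using hp),
    per_reverse]

end per

theorem IsPeriod.flatten_map_range {α : Type*} {u : ℕ → List α} {q : ℕ} (n : ℕ)
    (h₀ : IsPeriod (u 0) q) (hpair : ∀ i < n, IsPeriod (u i ++ u (i + 1)) q)
    (hlen : ∀ i < n, q ≤ (u i).length) :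
    IsPeriod ((List.range (n + 1)).map u).flatten q := by
  induction n with
  | zero => simpa using h₀
  | succ n ih =>
    have hstep : ((List.range (n + 2)).map u).flatten =
        ((List.range n).map u).flatten ++ u n ++ u (n + 1) := by
      simp [List.range_succ]
    have hprev : ((List.range (n + 1)).map u).flatten =
        ((List.range n).map u).flatten ++ u n := by
      simp [List.range_succ]
    rw [hstep]
    rw [hprev] at ih
    exact IsPeriod.append_of_overlap
      (ih (fun i hi => hpair i (by omega)) (fun i hi => hlen i (by omega)))
      (hpair n (by omega)) (hlen n (by omega))

theorem stmt_6_general {α : Type*} (τ M : ℕ) (hτ : 1 ≤ τ)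
    (u : ℕ → List α)
    (hlen : ∀ i ≤ M, (u i).length = 2 * τ)
    (hp : ∀ i < M, ∃ p ≤ τ, IsPeriod (u i ++ u (i + 1)) p) :
    IsPeriod (((List.range (M + 1)).map u).flatten) (per (u 0)) := by
  have hpair : ∀ i < M, per (u i ++ u (i + 1)) = per (u i) ∧
      per (u i ++ u (i + 1)) = per (u (i + 1)) ∧ IsPeriod (u i ++ u (i + 1)) (per (u i)) := by
    intro i hi
    obtain ⟨p, hpτ, hper⟩ := hp i hi
    have hleft := per_append_eq_left hper (by rw [hlen i hi.le]; omega)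
    exact ⟨hleft, per_append_eq_right hper (by rw [hlen (i + 1) hi]; omega),
      hleft ▸ hper.isPeriod_per⟩
  have hper : ∀ i ≤ M, per (u i) = per (u 0) := by
    intro i hi
    induction i with
    | zero => rfl
    | succ i ih => rw [← (hpair i hi).2.1, (hpair i hi).1, ih (by omega)]
  have hu₀ : 0 < (u 0).length := by rw [hlen 0 (Nat.zero_le _)]; omega
  refine IsPeriod.flatten_map_range M (IsPeriod.of_length_pos hu₀).isPeriod_per
    (fun i hi => hper i hi.le ▸ (hpair i hi).2.2) fun i hi => ?_
  rw [hlen i hi.le, ← hlen 0 (Nat.zero_le _)]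
  exact per_le_length hu₀

/-- If each consecutive concatenation `uᵢ ++ u_{i+1}` of the length-`2τ` strings
`u₀, …, u_M` has a period of length at most `τ`, then `per (u 0)` is a period of the
full concatenation `u₀ ++ u₁ ++ ⋯ ++ u_M`. -/
theorem stmt_6 {α : Type*} [DecidableEq α] (τ M : ℕ) (hτ : 1 ≤ τ) (hM : 1 ≤ M)
    (u : ℕ → List α)
    (hlen : ∀ i ≤ M, (u i).length = 2 * τ)
    (hp : ∀ i < M, ∃ p ≤ τ, IsPeriod (u i ++ u (i + 1)) p) :
    IsPeriod (((List.range (M + 1)).map u).flatten) (per (u 0)) :=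
  stmt_6_general τ M hτ u hlen hp
end

section
/- Let p be a prime and let u and v be distinct strings over ZMod p of equal length m ≥ 1. Then the number of x ∈ ZMod p with φ_{p,x}(u) = φ_{p,x}(v) is at most m − 1. In particular, if x is chosen uniformly at random from ZMod p, the probability of a fingerprint collision between u and v is at most max(|u|, |v|)/p. -/
/-- The Karp–Rabin fingerprint `φ_{p,x}(S) = Σ_{k < |S|} S[k]·xᵏ` over `ZMod p`. -/
def fp {p : ℕ} (x : ZMod p) (S : List (ZMod p)) : ZMod p :=
  ∑ k ∈ Finset.range S.length, S.getD k 0 * x ^ k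

/-- For distinct strings `u ≠ v` of equal length `m ≥ 1` over `ZMod p`, at most `m - 1`
values of `x` give a fingerprint collision; in particular a uniformly random `x` collides
with probability at most `max(|u|,|v|)/p`. -/
theorem stmt_9 (p : ℕ) [Fact p.Prime] (m : ℕ) (hm : 1 ≤ m)
    (u v : List (ZMod p)) (huv : u ≠ v)
    (hu : u.length = m) (hv : v.length = m) :
    (Finset.univ.filter (fun x : ZMod p => fp x u = fp x v)).card ≤ m - 1 ∧
    ((Finset.univ.filter (fun x : ZMod p => fp x u = fp x v)).card : ℝ) / p ≤
      (max u.length v.length : ℝ) / p := by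
  set P : Polynomial (ZMod p) :=
    ∑ k ∈ Finset.range m, Polynomial.monomial k (u.getD k 0 - v.getD k 0) with hP
  have hcoeff : ∀ n, P.coeff n = if n < m then u.getD n 0 - v.getD n 0 else 0 := by
    intro n
    rw [hP, Polynomial.finset_sum_coeff]
    simp only [Polynomial.coeff_monomial]
    split
    · next h =>
      rw [Finset.sum_eq_single n]
      · simp
      · intro b _ hb; simp [hb]
      · intro hn; exact absurd (Finset.mem_range.mpr h) hn
    · next h =>
      apply Finset.sum_eq_zero
      intro b hb
      have : b ≠ n := by rintro rfl; exact h (Finset.mem_range.mp hb)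
      simp [this]
  have hPne : P ≠ 0 := by
    intro h0
    apply huv
    apply List.ext_getElem (hu.trans hv.symm)
    intro k hk1 hk2
    have hkm : k < m := hu ▸ hk1
    have := hcoeff k
    rw [h0] at this
    simp only [Polynomial.coeff_zero, if_pos hkm] at this
    have : u.getD k 0 = v.getD k 0 := by linear_combination -this
    rwa [List.getD_eq_getElem _ _ hk1, List.getD_eq_getElem _ _ hk2] at this
  have hdeg : P.natDegree ≤ m - 1 := by
    rw [Polynomial.natDegree_le_iff_coeff_eq_zero]
    intro n hn
    rw [hcoeff]
    have : ¬ n < m := by omega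
    simp [this]
  have heval : ∀ x : ZMod p, P.eval x = fp x u - fp x v := by
    intro x
    rw [hP]
    simp only [Polynomial.eval_finset_sum, Polynomial.eval_monomial, fp, hu, hv]
    rw [← Finset.sum_sub_distrib]
    congr 1; ext k; ring
  have hsub : (Finset.univ.filter (fun x : ZMod p => fp x u = fp x v)) ⊆ P.roots.toFinset := by
    intro x hx
    rw [Finset.mem_filter] at hx
    rw [Multiset.mem_toFinset, Polynomial.mem_roots hPne, Polynomial.IsRoot, heval, hx.2, sub_self]
  have h1 : (Finset.univ.filter (fun x : ZMod p => fp x u = fp x v)).card ≤ m - 1 := by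
    calc _ ≤ P.roots.toFinset.card := Finset.card_le_card hsub
    _ ≤ Multiset.card P.roots := P.roots.toFinset_card_le
    _ ≤ P.natDegree := P.card_roots' 
    _ ≤ m - 1 := hdeg
  refine ⟨h1, ?_⟩
  have hple : ((Finset.univ.filter (fun x : ZMod p => fp x u = fp x v)).card : ℝ) ≤
      (max u.length v.length : ℝ) := by
    have : (Finset.univ.filter (fun x : ZMod p => fp x u = fp x v)).card ≤ max u.length v.length := by
      omega
    exact_mod_cast this
  rcases eq_or_ne (p:ℝ) 0 with h0 | h0
  · simp [h0]
  · have hp0 : (0:ℝ) < p := lt_of_le_of_ne (by positivity) (Ne.symm h0)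
    gcongr
end

section
/- Let p be a prime and let T be a string over ZMod p of length n ≥ 1. Then the number of x ∈ ZMod p for which φ_{p,x} is NOT collision-free on the substrings of T — that is, for which there exist positions i, i' and a length ℓ with i + ℓ ≤ n, i' + ℓ ≤ n, (T.drop i).take ℓ ≠ (T.drop i').take ℓ, but φ_{p,x}((T.drop i).take ℓ) = φ_{p,x}((T.drop i').take ℓ) — is at most n⁴. Consequently, if p ≥ n^{4+c} for some c > 0, a uniformly random x ∈ ZMod p yields a fingerprint that is collision-free on all pairs of substrings of T with probability at least 1 − n^{−c}. -/
/-- `x` yields a fingerprint that is NOT collision-free on the substrings of `T`. -/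
def Bad {p : ℕ} (T : List (ZMod p)) (n : ℕ) (x : ZMod p) : Prop :=
  ∃ i i' ℓ : ℕ, i + ℓ ≤ n ∧ i' + ℓ ≤ n ∧
    (T.drop i).take ℓ ≠ (T.drop i').take ℓ ∧
    fp x ((T.drop i).take ℓ) = fp x ((T.drop i').take ℓ)

open Polynomial Finset in
theorem key_card {p : ℕ} [Fact p.Prime] (T : List (ZMod p)) (n : ℕ)
    (hn : T.length = n) (i i' ℓ : ℕ) :
    (Finset.filter (fun x : ZMod p =>
      i + ℓ ≤ n ∧ i' + ℓ ≤ n ∧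
      (T.drop i).take ℓ ≠ (T.drop i').take ℓ ∧
      fp x ((T.drop i).take ℓ) = fp x ((T.drop i').take ℓ)) Finset.univ).card ≤ n := by
  classical
  by_cases hc : i + ℓ ≤ n ∧ i' + ℓ ≤ n
  · obtain ⟨h1, h2⟩ := hc
    set A := (T.drop i).take ℓ with hA
    set B := (T.drop i').take ℓ with hB
    by_cases hAB : A = B
    · simp [hAB]
    · have hAl : A.length = ℓ := by
        simp [hA, List.length_take, List.length_drop, hn]; omega
      have hBl : B.length = ℓ := by
        simp [hB, List.length_take, List.length_drop, hn]; omega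
      set a : ℕ → ZMod p := fun k => A.getD k 0 with ha
      set b : ℕ → ZMod p := fun k => B.getD k 0 with hb
      set Q : Polynomial (ZMod p) := ∑ k ∈ Finset.range ℓ, C (a k - b k) * X ^ k with hQ
      have hcoeff : ∀ j < ℓ, Q.coeff j = a j - b j := by
        intro j hj
        rw [hQ, finset_sum_coeff]
        rw [Finset.sum_eq_single j]
        · simp [sub_mul, coeff_sub, coeff_C_mul, coeff_X_pow]
        · intro k hk hkj
          simp [sub_mul, coeff_sub, coeff_C_mul, coeff_X_pow, Ne.symm hkj]
        · intro hjm; exact absurd (Finset.mem_range.mpr hj) hjm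
      have hQne : Q ≠ 0 := by
        have hex : ∃ j < ℓ, a j ≠ b j := by
          by_contra hcon
          push_neg at hcon
          apply hAB
          apply List.ext_getElem (by rw [hAl, hBl])
          intro k hk1 hk2
          have hkℓ : k < ℓ := by rwa [hAl] at hk1
          have h : A.getD k 0 = B.getD k 0 := hcon k hkℓ
          rwa [List.getD_eq_getElem A 0 hk1, List.getD_eq_getElem B 0 hk2] at h
        obtain ⟨j, hj, hjne⟩ := hex
        intro h0
        have h := hcoeff j hj
        rw [h0] at h
        simp at h
        exact hjne (sub_eq_zero.mp h.symm)
      have hdeg : Q.natDegree ≤ n := by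
        apply Polynomial.natDegree_sum_le_of_forall_le
        intro k hk
        exact le_trans (natDegree_C_mul_X_pow_le _ _) (by
          have := Finset.mem_range.mp hk; omega)
      have heval : ∀ x : ZMod p, fp x A = fp x B → Q.eval x = 0 := by
        intro x hx
        rw [hQ, eval_finset_sum]
        simp only [eval_mul, eval_C, eval_pow, eval_X, sub_mul]
        rw [Finset.sum_sub_distrib]
        have hA' : fp x A = ∑ k ∈ Finset.range ℓ, a k * x ^ k := by rw [fp, hAl]
        have hB' : fp x B = ∑ k ∈ Finset.range ℓ, b k * x ^ k := by rw [fp, hBl]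
        rw [← hA', ← hB', hx, sub_self]
      calc (Finset.filter (fun x : ZMod p =>
              i + ℓ ≤ n ∧ i' + ℓ ≤ n ∧ A ≠ B ∧ fp x A = fp x B) Finset.univ).card
          ≤ Q.roots.toFinset.card := by
            apply Finset.card_le_card
            intro x hx
            rw [Finset.mem_filter] at hx
            rw [Multiset.mem_toFinset, Polynomial.mem_roots hQne]
            exact heval x hx.2.2.2.2
        _ ≤ Multiset.card Q.roots := Multiset.toFinset_card_le _
        _ ≤ Q.natDegree := Polynomial.card_roots' Q
        _ ≤ n := hdeg
  · have : (Finset.filter (fun x : ZMod p =>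
        i + ℓ ≤ n ∧ i' + ℓ ≤ n ∧
        (T.drop i).take ℓ ≠ (T.drop i').take ℓ ∧
        fp x ((T.drop i).take ℓ) = fp x ((T.drop i').take ℓ)) Finset.univ) = ∅ := by
      apply Finset.filter_false_of_mem
      intro x _ hx
      exact hc ⟨hx.1, hx.2.1⟩
    rw [this]
    simp

/-- At most `n⁴` values of `x` fail to be collision-free on the substrings of `T`;
consequently, if `p ≥ n^(4+c)` with `c > 0`, a uniformly random `x` is collision-free
on all pairs of substrings of `T` with probability at least `1 - n^(-c)`. -/
theorem stmt_10 (p : ℕ) [Fact p.Prime] (T : List (ZMod p)) (n : ℕ)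
    (hn : T.length = n) (hn1 : 1 ≤ n) :
    (@Finset.filter _ (Bad T n) (Classical.decPred _) Finset.univ).card ≤ n ^ 4 ∧
    ∀ c : ℝ, 0 < c → (n : ℝ) ^ ((4 : ℝ) + c) ≤ (p : ℝ) →
      1 - (n : ℝ) ^ (-c) ≤
        ((@Finset.filter _ (fun x : ZMod p => ¬ Bad T n x)
            (Classical.decPred _) Finset.univ).card : ℝ) / p := by
  classical
  have hp : 0 < p := (Fact.out : p.Prime).pos
  have part1 : (@Finset.filter _ (Bad T n) (Classical.decPred _) Finset.univ).card ≤ n ^ 4 := by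
    have hsub : (@Finset.filter _ (Bad T n) (Classical.decPred _) Finset.univ) ⊆
        (Finset.range n ×ˢ Finset.range n ×ˢ Finset.range n).biUnion
          (fun t => Finset.filter (fun x : ZMod p =>
            t.1 + (t.2.2 + 1) ≤ n ∧ t.2.1 + (t.2.2 + 1) ≤ n ∧
            (T.drop t.1).take (t.2.2 + 1) ≠ (T.drop t.2.1).take (t.2.2 + 1) ∧
            fp x ((T.drop t.1).take (t.2.2 + 1)) = fp x ((T.drop t.2.1).take (t.2.2 + 1)))
            Finset.univ) := by
      intro x hx
      rw [Finset.mem_filter] at hx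
      obtain ⟨-, i, i', ℓ, hi, hi', hne, heq⟩ := hx
      have hℓ1 : 1 ≤ ℓ := by
        by_contra h
        have : ℓ = 0 := by omega
        simp [this] at hne
      have hℓ : ℓ - 1 + 1 = ℓ := by omega
      rw [Finset.mem_biUnion]
      refine ⟨(i, i', ℓ - 1), ?_, ?_⟩
      · simp only [Finset.mem_product, Finset.mem_range]
        exact ⟨by omega, by omega, by omega⟩
      · rw [Finset.mem_filter]
        refine ⟨Finset.mem_univ x, ?_⟩
        simp only [hℓ]
        exact ⟨hi, hi', hne, heq⟩
    calc (@Finset.filter _ (Bad T n) (Classical.decPred _) Finset.univ).card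
        ≤ _ := Finset.card_le_card hsub
      _ ≤ ∑ t ∈ Finset.range n ×ˢ Finset.range n ×ˢ Finset.range n, _ :=
          Finset.card_biUnion_le
      _ ≤ ∑ _t ∈ Finset.range n ×ˢ Finset.range n ×ˢ Finset.range n, n := by
          apply Finset.sum_le_sum
          intro t _
          exact key_card T n hn t.1 t.2.1 (t.2.2 + 1)
      _ = n ^ 4 := by
          rw [Finset.sum_const, smul_eq_mul]
          simp [Finset.card_product]
          ring
  refine ⟨part1, ?_⟩
  intro c hc hpc
  have hsum : (@Finset.filter _ (Bad T n) (Classical.decPred _) Finset.univ).card +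
      (@Finset.filter _ (fun x : ZMod p => ¬ Bad T n x)
        (Classical.decPred _) Finset.univ).card = p := by
    have h := Finset.card_filter_add_card_filter_not
      (s := (Finset.univ : Finset (ZMod p))) (p := Bad T n)
    rw [Finset.card_univ, ZMod.card] at h
    convert h using 3 <;> congr
  have hbadle : (@Finset.filter _ (Bad T n) (Classical.decPred _) Finset.univ).card ≤ p := by
    omega
  have hnR : (1 : ℝ) ≤ (n : ℝ) := by exact_mod_cast hn1
  have hnpos : (0 : ℝ) < (n : ℝ) := by linarith
  have hppos : (0 : ℝ) < (p : ℝ) := by exact_mod_cast hp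
  have hn4 : ((n : ℝ)) ^ (4 : ℕ) = (n : ℝ) ^ ((4 : ℝ) : ℝ) := by
    rw [show ((4 : ℝ)) = ((4 : ℕ) : ℝ) by norm_num, Real.rpow_natCast]
  have hstep : ((n : ℝ)) ^ (4 : ℕ) / p ≤ (n : ℝ) ^ (-c) := by
    have h1 : ((n : ℝ)) ^ (4 : ℕ) / p ≤ ((n : ℝ)) ^ (4 : ℕ) / (n : ℝ) ^ ((4 : ℝ) + c) :=
      div_le_div_of_nonneg_left (by positivity) (Real.rpow_pos_of_pos hnpos _) hpc
    calc ((n : ℝ)) ^ (4 : ℕ) / p ≤ _ := h1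
      _ = (n : ℝ) ^ (-c) := by
        rw [hn4, ← Real.rpow_sub hnpos]
        norm_num
  have hcast : ((@Finset.filter _ (fun x : ZMod p => ¬ Bad T n x)
      (Classical.decPred _) Finset.univ).card : ℝ)
      = (p : ℝ) - ((@Finset.filter _ (Bad T n) (Classical.decPred _) Finset.univ).card : ℝ) := by
    have : (@Finset.filter _ (fun x : ZMod p => ¬ Bad T n x)
        (Classical.decPred _) Finset.univ).card
        = p - (@Finset.filter _ (Bad T n) (Classical.decPred _) Finset.univ).card := by omega
    rw [this, Nat.cast_sub hbadle]
  rw [hcast]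
  have hb : ((@Finset.filter _ (Bad T n) (Classical.decPred _) Finset.univ).card : ℝ)
      ≤ ((n : ℝ)) ^ (4 : ℕ) := by exact_mod_cast part1
  have hmain : ((p : ℝ) - ((n : ℝ)) ^ (4 : ℕ)) / p ≤
      ((p : ℝ) - ((@Finset.filter _ (Bad T n) (Classical.decPred _) Finset.univ).card : ℝ)) / p := by
    gcongr
  refine le_trans ?_ hmain
  rw [sub_div, div_self (ne_of_gt hppos)]
  linarith
end

section
/- For every natural number m, the sum Σ_{μ=0}^{m} 2^{m−μ} · 2^{⌊μ/2⌋} is at most (2 + √2) · 2^m (as real numbers). (This bounds the total number of sampled positions |𝒮| by (2 + √2) · n/τ in the Monte Carlo data structure.) -/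
noncomputable def auxC (m : ℕ) : ℝ :=
  if m % 2 = 0 then 2 ^ (m / 2 + 1) else 3 * 2 ^ (m / 2)

lemma auxC_nonneg (m : ℕ) : 0 ≤ auxC m := by
  unfold auxC; split <;> positivity

lemma sum_eq (m : ℕ) :
    ∑ μ ∈ Finset.range (m + 1), ((2 : ℝ) ^ (m - μ) * (2 : ℝ) ^ (μ / 2)) =
      3 * 2 ^ m - auxC m := by
  induction m with
  | zero => simp [auxC]; norm_num
  | succ m ih =>
    rw [Finset.sum_range_succ]
    have h1 : ∑ μ ∈ Finset.range (m + 1), ((2 : ℝ) ^ (m + 1 - μ) * (2 : ℝ) ^ (μ / 2)) =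
        2 * ∑ μ ∈ Finset.range (m + 1), ((2 : ℝ) ^ (m - μ) * (2 : ℝ) ^ (μ / 2)) := by
      rw [Finset.mul_sum]
      apply Finset.sum_congr rfl
      intro μ hμ
      rw [Finset.mem_range] at hμ
      have : m + 1 - μ = (m - μ) + 1 := by omega
      rw [this, pow_succ]
      ring
    rw [h1, ih]
    have hC : 2 * auxC m - 2 ^ ((m + 1) / 2) = auxC (m + 1) := by
      rcases Nat.even_or_odd m with ⟨k, rfl⟩ | ⟨k, rfl⟩
      · have h2 : (k + k) % 2 = 0 := by omega
        have h3 : (k + k + 1) % 2 = 1 := by omega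
        have h4 : (k + k) / 2 = k := by omega
        have h5 : (k + k + 1) / 2 = k := by omega
        simp [auxC, h2, h3, h4, h5]
        ring
      · have h2 : (2 * k + 1) % 2 = 1 := by omega
        have h3 : (2 * k + 2) % 2 = 0 := by omega
        have h4 : (2 * k + 1) / 2 = k := by omega
        have h5 : (2 * k + 2) / 2 = k + 1 := by omega
        have h6 : (2 * k + 1 + 1) = 2 * k + 2 := by omega
        simp [auxC, h2, h3, h4, h5, h6]
        ring
    rw [← hC]
    have : ((2:ℝ) ^ (m + 1 - (m + 1))) = 1 := by norm_num
    rw [this]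
    ring

/-- `Σ_{μ=0}^{m} 2^(m-μ) · 2^⌊μ/2⌋ ≤ (2 + √2) · 2^m`, bounding the number of sampled
positions in the Monte Carlo data structure. -/
theorem stmt_11 (m : ℕ) :
    ∑ μ ∈ Finset.range (m + 1), ((2 : ℝ) ^ (m - μ) * (2 : ℝ) ^ (μ / 2)) ≤
      (2 + Real.sqrt 2) * 2 ^ m := by
  rw [sum_eq]
  have h1 : (1:ℝ) ≤ Real.sqrt 2 := by
    rw [show (1:ℝ) = Real.sqrt 1 by simp]
    exact Real.sqrt_le_sqrt (by norm_num)
  have h2 : 0 ≤ auxC m := auxC_nonneg m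
  have h3 : (0:ℝ) < 2 ^ m := by positivity
  nlinarith
end

section
/- Let τ ≥ 1 be an integer and let i, j be integers. Define δ = (((i − j) mod τ) − i) mod τ², where mod denotes the integer modulo operation returning a representative in [0, modulus). Then 0 ≤ (i + δ) mod τ² ≤ τ and (j + δ) mod τ = 0. Consequently, both (i + δ) mod τ² and (j + δ) mod τ² lie in the set D_τ = {r ∈ [0, τ²) : r ≤ τ or τ divides r}, i.e., both i + δ and j + δ are sampled positions of the difference-cover set 𝒮_τ = {q : q mod τ² ∈ D_τ}. -/
/-- Difference-cover property: with `δ = (((i - j) mod τ) - i) mod τ²` we have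
`0 ≤ (i + δ) mod τ² ≤ τ` and `(j + δ) mod τ = 0`; consequently both `(i + δ) mod τ²`
and `(j + δ) mod τ²` lie in `D_τ = {r ∈ [0, τ²) : r ≤ τ ∨ τ ∣ r}`, i.e. `i + δ` and
`j + δ` are sampled positions of `𝒮_τ`. -/
theorem stmt_12 (τ i j : ℤ) (hτ : 1 ≤ τ) :
    let δ : ℤ := ((i - j) % τ - i) % τ ^ 2
    (0 ≤ (i + δ) % τ ^ 2 ∧ (i + δ) % τ ^ 2 ≤ τ) ∧
    (j + δ) % τ = 0 ∧
    ((0 ≤ (i + δ) % τ ^ 2 ∧ (i + δ) % τ ^ 2 < τ ^ 2) ∧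
      ((i + δ) % τ ^ 2 ≤ τ ∨ τ ∣ (i + δ) % τ ^ 2)) ∧
    ((0 ≤ (j + δ) % τ ^ 2 ∧ (j + δ) % τ ^ 2 < τ ^ 2) ∧
      ((j + δ) % τ ^ 2 ≤ τ ∨ τ ∣ (j + δ) % τ ^ 2)) := by
  intro δ
  have hτ0 : 0 < τ := hτ
  have hτ2 : 0 < τ ^ 2 := by positivity
  have hττ : τ ≤ τ ^ 2 := by nlinarith
  have hx0 : 0 ≤ (i - j) % τ := Int.emod_nonneg _ (by omega)
  have hx1 : (i - j) % τ < τ := Int.emod_lt_of_pos _ hτ0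
  have hdvd : τ ∣ τ ^ 2 := ⟨τ, by ring⟩
  have h1 : (i + δ) % τ ^ 2 = (i - j) % τ := by
    show (i + ((i - j) % τ - i) % τ ^ 2) % τ ^ 2 = (i - j) % τ
    rw [Int.add_emod_emod]
    have : i + ((i - j) % τ - i) = (i - j) % τ := by ring
    rw [this, Int.emod_eq_of_lt hx0 (by omega)]
  have h2 : (j + δ) % τ = 0 := by
    show (j + ((i - j) % τ - i) % τ ^ 2) % τ = 0
    rw [Int.add_emod, Int.emod_emod_of_dvd _ hdvd, ← Int.add_emod]
    have : (j + ((i - j) % τ - i)) % τ = ((i - j) % τ - (i - j)) % τ := by ring_nf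
    rw [this, Int.sub_emod, Int.emod_emod_of_dvd _ dvd_rfl]
    simp
  have h3 : τ ∣ (j + δ) % τ ^ 2 := by
    apply Int.dvd_of_emod_eq_zero
    rw [Int.emod_emod_of_dvd _ hdvd, h2]
  refine ⟨⟨by omega, by omega⟩, h2, ⟨⟨Int.emod_nonneg _ (by omega), Int.emod_lt_of_pos _ hτ2⟩, by omega⟩,
    ⟨⟨Int.emod_nonneg _ (by omega), Int.emod_lt_of_pos _ hτ2⟩, Or.inr h3⟩⟩
end

section
/- Let p be a prime, let L ≥ 1, and let P be a finite set of pairs (u, v) of strings over ZMod p such that for every (u, v) ∈ P, u ≠ v and |u| = |v| ≤ L. Then Σ_{x ∈ ZMod p} |{(u, v) ∈ P : φ_{p,x}(u) = φ_{p,x}(v)}| ≤ |P| · L; consequently, there exists x ∈ ZMod p such that the number of pairs (u, v) ∈ P with φ_{p,x}(u) = φ_{p,x}(v) is at most |P| · L / p (as a real number). -/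
/-!
A fingerprint collision `φ_{p,x}(u) = φ_{p,x}(v)` says that `x` is a root of the polynomial whose
coefficients are the differences `u[k] - v[k]`. For `u ≠ v` this polynomial is nonzero of degree
less than `L`, so it has at most `L` roots in the field `ZMod p`. Double counting the pairs
`(x, (u, v))` bounds the total number of collisions by `|P| · L`, and averaging over the `p`
choices of `x` gives the second claim.
-/

open Finset Polynomial

theorem Polynomial.card_filter_eval_eq_zero_le {R : Type*} [CommRing R] [IsDomain R] [Fintype R]
    [DecidableEq R] {f : R[X]} (hf : f ≠ 0) : #{x | f.eval x = 0} ≤ f.natDegree :=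
  card_le_degree_of_subset_roots fun _ hx => (mem_roots hf).2 (mem_filter.1 hx).2

theorem Finset.exists_le_div_card_of_sum_le {ι K : Type*} [Fintype ι] [Nonempty ι] [Field K]
    [LinearOrder K] [IsStrictOrderedRing K] {f : ι → K} {B : K} (h : ∑ i, f i ≤ B) :
    ∃ i, f i ≤ B / Fintype.card ι := by
  obtain ⟨i, -, hi⟩ :=
    exists_le_of_sum_le univ_nonempty (f := f) (g := fun _ => B / Fintype.card ι) <| by
    rwa [sum_const, card_univ, nsmul_eq_mul, mul_div_cancel₀ _ (by positivity)]
  exact ⟨i, hi⟩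

theorem List.eq_of_getD_eq_of_length_eq {α : Type*} {L : ℕ} {u v : List α} (d : α)
    (hlen : u.length = v.length) (hle : u.length ≤ L)
    (h : (fun i : Fin L => u.getD i d) = fun i : Fin L => v.getD i d) : u = v := by
  refine List.ext_getElem hlen fun k hu hv => ?_
  simpa [List.getElem?_eq_getElem hu, List.getElem?_eq_getElem hv] using
    congrFun h ⟨k, hu.trans_le hle⟩

theorem fp_eq_eval_ofFn {p L : ℕ} (x : ZMod p) {S : List (ZMod p)} (hS : S.length ≤ L) :
    fp x S = (ofFn L fun i : Fin L => S.getD i 0).eval x := by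
  rw [fp, ofFn_eq_sum_monomial, eval_finsetSum]
  simp only [eval_monomial]
  rw [Fin.sum_univ_eq_sum_range (fun k => S.getD k 0 * x ^ k)]
  exact sum_subset (range_subset_range.2 hS) fun k _ hk => by
    rw [List.getD_eq_default _ _ (not_lt.1 (mem_range.not.1 hk)), zero_mul]

theorem card_fp_eq_fp_le {p L : ℕ} [Fact p.Prime] {u v : List (ZMod p)} (hne : u ≠ v)
    (hlen : u.length = v.length) (hle : u.length ≤ L) :
    #{x : ZMod p | fp x u = fp x v} ≤ L := by
  set f := ofFn L ((fun i : Fin L => u.getD i 0) - fun i : Fin L => v.getD i 0)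
  have hf : f ≠ 0 := by
    refine (map_ne_zero_iff _ (injective_ofFn L)).2 (sub_ne_zero.2 fun h => hne ?_)
    exact List.eq_of_getD_eq_of_length_eq 0 hlen hle h
  calc #{x : ZMod p | fp x u = fp x v} = #{x | f.eval x = 0} := by
        simp_rw [f, map_sub, eval_sub, sub_eq_zero, ← fp_eq_eval_ofFn _ hle,
          ← fp_eq_eval_ofFn _ (hlen ▸ hle)]
    _ ≤ f.natDegree := card_filter_eval_eq_zero_le hf
    _ ≤ L := natDegree_le_of_degree_le (ofFn_degree_lt _).le

theorem stmt_14_general (p : ℕ) [Fact p.Prime] (L : ℕ)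
    (P : Finset (List (ZMod p) × List (ZMod p)))
    (hP : ∀ uv ∈ P, uv.1 ≠ uv.2 ∧ uv.1.length = uv.2.length ∧ uv.1.length ≤ L) :
    (∑ x : ZMod p, (P.filter (fun uv => fp x uv.1 = fp x uv.2)).card ≤ P.card * L) ∧
    ∃ x : ZMod p, ((P.filter (fun uv => fp x uv.1 = fp x uv.2)).card : ℝ) ≤
      (P.card : ℝ) * L / p := by
  have hsum : ∑ x : ZMod p, #{uv ∈ P | fp x uv.1 = fp x uv.2} ≤ #P * L :=
    calc ∑ x : ZMod p, #{uv ∈ P | fp x uv.1 = fp x uv.2}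
        = ∑ uv ∈ P, #{x : ZMod p | fp x uv.1 = fp x uv.2} :=
          sum_card_bipartiteAbove_eq_sum_card_bipartiteBelow _
      _ ≤ #P • L := sum_le_card_nsmul _ _ _ fun uv huv =>
          have ⟨hne, hlen, hle⟩ := hP uv huv
          card_fp_eq_fp_le hne hlen hle
  refine ⟨hsum, ?_⟩
  simpa using exists_le_div_card_of_sum_le (B := (#P * L : ℝ))
    (f := fun x : ZMod p => (#{uv ∈ P | fp x uv.1 = fp x uv.2} : ℝ)) (by exact_mod_cast hsum)

/-- For a set `P` of pairs of distinct equal-length strings of length at most `L`, the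
total number of fingerprint collisions over all `x ∈ ZMod p` is at most `|P| · L`;
consequently some `x` incurs at most `|P| · L / p` collisions. -/
theorem stmt_14 (p : ℕ) [Fact p.Prime] (L : ℕ) (hL : 1 ≤ L)
    (P : Finset (List (ZMod p) × List (ZMod p)))
    (hP : ∀ uv ∈ P, uv.1 ≠ uv.2 ∧ uv.1.length = uv.2.length ∧ uv.1.length ≤ L) :
    (∑ x : ZMod p, (P.filter (fun uv => fp x uv.1 = fp x uv.2)).card ≤ P.card * L) ∧
    ∃ x : ZMod p, ((P.filter (fun uv => fp x uv.1 = fp x uv.2)).card : ℝ) ≤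
      (P.card : ℝ) * L / p :=
  stmt_14_general p L P hP
end

section
/- Let p be a prime, let L ≥ 1, and let P be a finite set of pairs (u, v) of strings over ZMod p such that for every (u, v) ∈ P, u ≠ v and |u| = |v| ≤ L. Then for every k ≥ 1 there exist x₁, …, x_k ∈ ZMod p such that the number of pairs (u, v) ∈ P with φ_{p,x_l}(u) = φ_{p,x_l}(v) for all l ∈ {1, …, k} is at most |P| · (L/p)^k (as a real number). In particular, if |P| · L^k < p^k, then there exist x₁, …, x_k ∈ ZMod p such that the combined fingerprint u ↦ (φ_{p,x₁}(u), …, φ_{p,x_k}(u)) distinguishes u from v for every pair (u, v) ∈ P. (This is the key step in the deterministic derandomization of Karp–Rabin fingerprints.) -/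
lemma root_bound {p : ℕ} [Fact p.Prime] {L : ℕ} (u v : List (ZMod p))
    (hne : u ≠ v) (hlen : u.length = v.length) (hle : u.length ≤ L) :
    (Finset.univ.filter (fun x : ZMod p => fp x u = fp x v)).card ≤ L := by
  set n := u.length with hn
  set Q : Polynomial (ZMod p) :=
    ∑ k ∈ Finset.range n, Polynomial.C (u.getD k 0 - v.getD k 0) * Polynomial.X ^ k with hQ
  have hev : ∀ x : ZMod p, Q.eval x = fp x u - fp x v := by
    intro x
    simp [hQ, Polynomial.eval_finset_sum, fp, ← hlen, sub_mul, Finset.sum_sub_distrib, hn]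
  have hcoeff : ∀ k, k < n → Q.coeff k = u.getD k 0 - v.getD k 0 := by
    intro k hk
    rw [hQ, Polynomial.finset_sum_coeff, Finset.sum_eq_single k]
    · simp [Polynomial.coeff_C_mul, Polynomial.coeff_X_pow, sub_mul]
    · intro b _ hbk
      simp [Polynomial.coeff_C_mul, Polynomial.coeff_X_pow, sub_mul, Ne.symm hbk]
    · intro h; exact absurd (Finset.mem_range.2 hk) h
  have hQne : Q ≠ 0 := by
    intro h0
    apply hne
    apply List.ext_getElem hlen
    intro k h1 h2
    have := hcoeff k h1
    rw [h0, Polynomial.coeff_zero] at this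
    have : u.getD k 0 = v.getD k 0 := by
      have h' := this.symm
      rwa [sub_eq_zero] at h'
    rwa [List.getD_eq_getElem u 0 h1, List.getD_eq_getElem v 0 h2] at this
  have hsub : (Finset.univ.filter (fun x : ZMod p => fp x u = fp x v)) ⊆ Q.roots.toFinset := by
    intro x hx
    rw [Finset.mem_filter] at hx
    rw [Multiset.mem_toFinset]
    refine Polynomial.mem_roots'.mpr ⟨hQne, ?_⟩
    show Q.eval x = 0
    rw [hev, hx.2, sub_self]
  calc (Finset.univ.filter (fun x : ZMod p => fp x u = fp x v)).card
      ≤ Q.roots.toFinset.card := Finset.card_le_card hsub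
    _ ≤ Multiset.card Q.roots := Multiset.toFinset_card_le _
    _ ≤ Q.natDegree := Polynomial.card_roots' Q
    _ ≤ L := by
        apply Polynomial.natDegree_sum_le_of_forall_le
        intro i hi
        exact le_trans (Polynomial.natDegree_C_mul_X_pow_le _ _)
          (le_trans (Nat.le_of_lt_succ (Nat.lt_succ_of_lt (Finset.mem_range.1 hi))) hle)

lemma avg {p : ℕ} [Fact p.Prime] {L : ℕ}
    (Q : Finset (List (ZMod p) × List (ZMod p)))
    (hQ : ∀ uv ∈ Q, uv.1 ≠ uv.2 ∧ uv.1.length = uv.2.length ∧ uv.1.length ≤ L) :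
    ∃ x : ZMod p, ((Q.filter (fun uv => fp x uv.1 = fp x uv.2)).card : ℝ) ≤
      (Q.card : ℝ) * L / p := by
  have hp : 0 < p := (Fact.out : p.Prime).pos
  have hsum : ∑ x : ZMod p, (Q.filter (fun uv => fp x uv.1 = fp x uv.2)).card ≤
      Q.card * L := by
    have : ∑ x : ZMod p, (Q.filter (fun uv => fp x uv.1 = fp x uv.2)).card =
        ∑ uv ∈ Q, (Finset.univ.filter (fun x : ZMod p => fp x uv.1 = fp x uv.2)).card := by
      simp only [Finset.card_filter]
      exact Finset.sum_comm
    rw [this]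
    calc ∑ uv ∈ Q, (Finset.univ.filter (fun x : ZMod p => fp x uv.1 = fp x uv.2)).card
        ≤ ∑ _uv ∈ Q, L := by
          apply Finset.sum_le_sum
          intro uv huv
          obtain ⟨h1, h2, h3⟩ := hQ uv huv
          exact root_bound uv.1 uv.2 h1 h2 h3
      _ = Q.card * L := by rw [Finset.sum_const, smul_eq_mul]
  haveI : NeZero p := ⟨hp.ne'⟩
  have hsum2 : ∑ x : ZMod p, ((Q.filter (fun uv => fp x uv.1 = fp x uv.2)).card : ℝ) ≤
      ∑ _x : ZMod p, (Q.card : ℝ) * L / p := by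
    have h1 : ∑ _x : ZMod p, (Q.card : ℝ) * L / p = (Q.card : ℝ) * L := by
      rw [Finset.sum_const, Finset.card_univ, ZMod.card, nsmul_eq_mul]
      field_simp
    rw [h1]
    calc ∑ x : ZMod p, ((Q.filter (fun uv => fp x uv.1 = fp x uv.2)).card : ℝ)
        = ((∑ x : ZMod p, (Q.filter (fun uv => fp x uv.1 = fp x uv.2)).card : ℕ) : ℝ) := by
          push_cast; ring_nf
      _ ≤ ((Q.card * L : ℕ) : ℝ) := Nat.cast_le.mpr hsum
      _ = (Q.card : ℝ) * L := by push_cast; ring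
  obtain ⟨x, -, hx⟩ := Finset.exists_le_of_sum_le (Finset.univ_nonempty (α := ZMod p)) hsum2
  exact ⟨x, hx⟩

/-- Derandomization of Karp–Rabin fingerprints: for every `k ≥ 1` some choice of
`x₁, …, x_k` leaves at most `|P| · (L/p)^k` pairs of `P` colliding on all `k`
fingerprints; in particular, if `|P| · L^k < p^k` then some combined fingerprint
`u ↦ (φ_{p,x₁}(u), …, φ_{p,x_k}(u))` distinguishes every pair in `P`. -/
theorem stmt_15 (p : ℕ) [Fact p.Prime] (L : ℕ) (hL : 1 ≤ L)
    (P : Finset (List (ZMod p) × List (ZMod p)))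
    (hP : ∀ uv ∈ P, uv.1 ≠ uv.2 ∧ uv.1.length = uv.2.length ∧ uv.1.length ≤ L) :
    (∀ k : ℕ, 1 ≤ k → ∃ xs : Fin k → ZMod p,
      ((P.filter (fun uv => ∀ l : Fin k, fp (xs l) uv.1 = fp (xs l) uv.2)).card : ℝ) ≤
        (P.card : ℝ) * ((L : ℝ) / p) ^ k) ∧
    (∀ k : ℕ, 1 ≤ k → (P.card : ℝ) * (L : ℝ) ^ k < (p : ℝ) ^ k →
      ∃ xs : Fin k → ZMod p, ∀ uv ∈ P, ∃ l : Fin k, fp (xs l) uv.1 ≠ fp (xs l) uv.2) := by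
  have hp : 0 < p := (Fact.out : p.Prime).pos
  have key : ∀ k : ℕ, ∃ xs : Fin k → ZMod p,
      ((P.filter (fun uv => ∀ l : Fin k, fp (xs l) uv.1 = fp (xs l) uv.2)).card : ℝ) ≤
        (P.card : ℝ) * ((L : ℝ) / p) ^ k := by
    intro k
    induction k with
    | zero =>
      refine ⟨Fin.elim0, ?_⟩
      simp
    | succ k ih =>
      obtain ⟨xs, hxs⟩ := ih
      set Q := P.filter (fun uv => ∀ l : Fin k, fp (xs l) uv.1 = fp (xs l) uv.2) with hQdef
      obtain ⟨x, hx⟩ := avg Q (fun uv huv => hP uv (Finset.mem_filter.mp huv).1)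
      refine ⟨Fin.cons (α := fun _ => ZMod p) x xs, ?_⟩
      have heq : P.filter (fun uv => ∀ l : Fin (k+1),
          fp (Fin.cons (α := fun _ => ZMod p) x xs l) uv.1 =
            fp (Fin.cons (α := fun _ => ZMod p) x xs l) uv.2) =
          Q.filter (fun uv => fp x uv.1 = fp x uv.2) := by
        ext uv
        simp only [Finset.mem_filter, hQdef, Fin.forall_fin_succ, Fin.cons_zero, Fin.cons_succ]
        tauto
      rw [heq]
      calc ((Q.filter (fun uv => fp x uv.1 = fp x uv.2)).card : ℝ)
          ≤ (Q.card : ℝ) * L / p := hx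
        _ ≤ ((P.card : ℝ) * ((L : ℝ) / p) ^ k) * L / p := by
            apply div_le_div_of_nonneg_right ?_ (by positivity)
            exact mul_le_mul_of_nonneg_right hxs (Nat.cast_nonneg L)
        _ = (P.card : ℝ) * ((L : ℝ) / p) ^ (k+1) := by
            rw [pow_succ]; ring
  constructor
  · intro k _; exact key k
  · intro k hk hlt
    obtain ⟨xs, hxs⟩ := key k
    have hppos : (0:ℝ) < (p:ℝ) ^ k := by positivity
    have hlt1 : (P.card : ℝ) * ((L : ℝ) / p) ^ k < 1 := by
      rw [div_pow, ← mul_div_assoc, div_lt_one hppos]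
      exact hlt
    have hcard0 : (P.filter (fun uv => ∀ l : Fin k,
        fp (xs l) uv.1 = fp (xs l) uv.2)).card = 0 := by
      by_contra h
      have h1 : (1:ℝ) ≤ ((P.filter (fun uv => ∀ l : Fin k,
          fp (xs l) uv.1 = fp (xs l) uv.2)).card : ℝ) := by
        exact_mod_cast Nat.one_le_iff_ne_zero.mpr h
      linarith
    rw [Finset.card_eq_zero] at hcard0
    refine ⟨xs, fun uv huv => ?_⟩
    by_contra hcon
    push_neg at hcon
    have : uv ∈ P.filter (fun uv => ∀ l : Fin k, fp (xs l) uv.1 = fp (xs l) uv.2) :=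
      Finset.mem_filter.mpr ⟨huv, hcon⟩
    rw [hcard0] at this
    exact absurd this (Finset.notMem_empty uv)
end
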